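/- Let n ≥ 3 and let W° = {±1}°^n ⋊ S_n be the group of coordinate permutations of ℝ^n combined with an even number of sign changes. Let c' = (1/2, …, 1/2, −1/2) and let W°_{c'} be its stabilizer in W°. Then every W°_{c'}-invariant polynomial function on ℝ^n lies in the ℝ-subalgebra generated by the W°-invariant polynomial functions f together with their translates v ↦ f(v + c'). -/

import Mathlib

open scoped RealInnerProductSpace

/-- The signed permutation `(ε, σ)` acting on `ℝ^n`: `x ↦ (ε i * x (σ i))_i`. -/
noncomputable def sgnPerm {n : ℕ} (ε : Fin n → ℝ) (σ : Equiv.Perm (Fin n))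
    (x : EuclideanSpace ℝ (Fin n)) : EuclideanSpace ℝ (Fin n) :=
  (WithLp.toLp 2 (fun i => ε i * x (σ i)) : EuclideanSpace ℝ (Fin n))

/-- A polynomial function on a real vector space `M`: an element of the `ℝ`-subalgebra of
`M → ℝ` generated by the linear functionals. -/
def IsPolyFun {M : Type*} [AddCommGroup M] [Module ℝ M] (f : M → ℝ) : Prop :=
  f ∈ Algebra.adjoin ℝ {g : M → ℝ | ∃ l : M →ₗ[ℝ] ℝ, g = ⇑l}

/-- Invariance of `f : ℝ^n → ℝ` under the group `W = {±1}^n ⋊ S_n` of all signed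
permutations of the coordinates. -/
def IsWInv {n : ℕ} (f : EuclideanSpace ℝ (Fin n) → ℝ) : Prop :=
  ∀ (ε : Fin n → ℝ), (∀ i, ε i = 1 ∨ ε i = -1) → ∀ σ : Equiv.Perm (Fin n),
    ∀ x, f (sgnPerm ε σ x) = f x

/-- Invariance of `f : ℝ^n → ℝ` under the group `W° = {±1}°^n ⋊ S_n` of signed
permutations with an even number of sign changes (`∏ ε i = 1`). -/
def IsW0Inv {n : ℕ} (f : EuclideanSpace ℝ (Fin n) → ℝ) : Prop :=
  ∀ (ε : Fin n → ℝ), (∀ i, ε i = 1 ∨ ε i = -1) → (∏ i, ε i = 1) →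
    ∀ σ : Equiv.Perm (Fin n), ∀ x, f (sgnPerm ε σ x) = f x

/-!
With `D = diag(1, …, 1, -1)` we have `c' = D (1/2, …, 1/2)`, so the stabilizer of `c'` in `W°`
is `D S_n D`. Hence `f ∘ D` is a symmetric polynomial, i.e. a polynomial in the power sums `p_m`
(Newton's identities), and `f` is a polynomial in the `q_m = p_m ∘ D`. For even `m`,
`q_m = p_m` is `W°`-invariant. For even `k`, `p_k` is `D`-invariant, so the translate
`v ↦ p_k (v + c') = p_k (D v + (1/2, …, 1/2))` expands binomially as
`∑_j (k choose j) 2^(j-k) q_j`; for `k = m + 1` with `m` odd the coefficient of `q_m` is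
`(m + 1) / 2 ≠ 0`, so `q_m` lies in the algebra by induction on `m`.
-/

open MvPolynomial

namespace MvPolynomial

variable {σ R : Type*} [Fintype σ] [CommRing R] [Algebra ℚ R]

theorem esymm_mem_adjoin_range_psum (k : ℕ) :
    esymm σ R k ∈ Algebra.adjoin R (Set.range (psum σ R)) := by
  induction k using Nat.strong_induction_on with
  | _ k ih =>
  rcases Nat.eq_zero_or_pos k with rfl | hk
  · rw [esymm_zero]
    exact Subalgebra.one_mem _
  have hnewton : ((k : ℚ)⁻¹ • (k * esymm σ R k) : MvPolynomial σ R) = esymm σ R k := by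
    rw [← nsmul_eq_mul, ← Nat.cast_smul_eq_nsmul ℚ, inv_smul_smul₀ (by exact_mod_cast hk.ne')]
  rw [← hnewton, mul_esymm_eq_sum, ← algebraMap_smul R]
  refine Subalgebra.smul_mem _ (Subalgebra.mul_mem _ (Subalgebra.pow_mem _
    (Subalgebra.neg_mem _ (Subalgebra.one_mem _)) _) (Subalgebra.sum_mem _ fun a ha => ?_)) _
  refine Subalgebra.mul_mem _ (Subalgebra.mul_mem _ (Subalgebra.pow_mem _
    (Subalgebra.neg_mem _ (Subalgebra.one_mem _)) _) (ih _ (Finset.mem_filter.mp ha).2)) ?_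
  exact Algebra.subset_adjoin ⟨a.2, rfl⟩

theorem IsSymmetric.mem_adjoin_range_psum {p : MvPolynomial σ R} (hp : p.IsSymmetric) :
    p ∈ Algebra.adjoin R (Set.range (psum σ R)) := by
  obtain ⟨q, hq⟩ := esymmAlgHom_surjective R (n := Fintype.card σ) le_rfl ⟨p, hp⟩
  have hpq : aeval (fun i : Fin (Fintype.card σ) => esymm σ R (i + 1)) q = p := by
    rw [← esymmAlgHom_apply, hq]
  have hq_mem : aeval (fun i : Fin (Fintype.card σ) => esymm σ R (i + 1)) q ∈
      Algebra.adjoin R (Set.range fun i : Fin (Fintype.card σ) => esymm σ R (i + 1)) := by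
    rw [Algebra.adjoin_range_eq_range_aeval]
    exact ⟨q, rfl⟩
  rw [← hpq]
  refine Algebra.adjoin_le ?_ hq_mem
  rintro _ ⟨i, rfl⟩
  exact esymm_mem_adjoin_range_psum _

end MvPolynomial

def precompAlgHom {R M N : Type*} [CommSemiring R] (g : M → N) : (N → R) →ₐ[R] (M → R) where
  toFun f := f ∘ g
  map_one' := rfl
  map_mul' _ _ := rfl
  map_zero' := rfl
  map_add' _ _ := rfl
  commutes' _ := rfl

@[simp]
theorem precompAlgHom_apply {R M N : Type*} [CommSemiring R] (g : M → N) (f : N → R) (x : M) :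
    precompAlgHom g f x = f (g x) := rfl

theorem IsPolyFun.comp_linearMap {M N : Type*} [AddCommGroup M] [Module ℝ M] [AddCommGroup N]
    [Module ℝ N] {f : N → ℝ} (hf : IsPolyFun f) (L : M →ₗ[ℝ] N) : IsPolyFun (f ∘ L) := by
  have hmap : precompAlgHom L f ∈ (Algebra.adjoin ℝ _).map (precompAlgHom L) :=
    Subalgebra.mem_map.mpr ⟨f, hf, rfl⟩
  rw [AlgHom.map_adjoin] at hmap
  refine Algebra.adjoin_mono ?_ hmap
  rintro _ ⟨_, ⟨l, rfl⟩, rfl⟩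
  exact ⟨l ∘ₗ L, rfl⟩

section PolynomialFunctions

variable {ι : Type*}

variable (ι) in
noncomputable def evalFun : MvPolynomial ι ℝ →ₐ[ℝ] (EuclideanSpace ℝ ι → ℝ) :=
  aeval fun i x => x i

theorem evalFun_apply (p : MvPolynomial ι ℝ) (x : EuclideanSpace ℝ ι) :
    evalFun ι p x = eval (fun i => x i) p := by
  rw [← coe_aeval_eq_eval]
  exact DFunLike.congr_fun (comp_aeval (f := fun i (y : EuclideanSpace ℝ ι) => y i)
    (Pi.evalAlgHom ℝ (fun _ => ℝ) x)) p

theorem evalFun_injective : Function.Injective (evalFun ι) := fun p q hpq =>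
  MvPolynomial.funext fun x => by
    simpa only [evalFun_apply] using congrFun hpq (WithLp.toLp 2 x)

theorem evalFun_psum [Fintype ι] (m : ℕ) (x : EuclideanSpace ℝ ι) :
    evalFun ι (psum ι ℝ m) x = ∑ i, x i ^ m := by
  simp [evalFun_apply, psum]

theorem adjoin_linearFunctionals_eq_range_evalFun [Fintype ι] :
    Algebra.adjoin ℝ {g : EuclideanSpace ℝ ι → ℝ | ∃ l : EuclideanSpace ℝ ι →ₗ[ℝ] ℝ, g = ⇑l} =
      (evalFun ι).range := by
  rw [evalFun, ← Algebra.adjoin_range_eq_range_aeval]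
  apply le_antisymm
  · rw [Algebra.adjoin_le_iff]
    rintro _ ⟨l, rfl⟩
    have hl : ⇑l = ∑ i, l (EuclideanSpace.basisFun ι ℝ i) • fun x : EuclideanSpace ℝ ι => x i := by
      ext x
      conv_lhs => rw [← (EuclideanSpace.basisFun ι ℝ).toBasis.sum_repr x]
      simp [mul_comm]
    rw [SetLike.mem_coe, hl]
    exact Subalgebra.sum_mem _ fun i _ =>
      Subalgebra.smul_mem _ (Algebra.subset_adjoin (Set.mem_range_self i)) _
  · refine Algebra.adjoin_mono ?_
    rintro _ ⟨i, rfl⟩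
    exact ⟨PiLp.projₗ 2 (fun _ => ℝ) i, rfl⟩

theorem isPolyFun_iff_exists_evalFun [Fintype ι] {f : EuclideanSpace ℝ ι → ℝ} :
    IsPolyFun f ↔ ∃ p, evalFun ι p = f := by
  rw [IsPolyFun, adjoin_linearFunctionals_eq_range_evalFun, AlgHom.mem_range]

end PolynomialFunctions

section SignFlip

variable {ι : Type*} (s : ι → ℝ)

def signFlip : EuclideanSpace ℝ ι →ₗ[ℝ] EuclideanSpace ℝ ι where
  toFun x := WithLp.toLp 2 fun i => s i * x i
  map_add' x y := by ext i; simp [mul_add]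
  map_smul' a x := by ext i; simp [mul_left_comm]

@[simp]
theorem signFlip_apply (x : EuclideanSpace ℝ ι) (i : ι) : signFlip s x i = s i * x i := rfl

variable {s} (hs : ∀ i, s i * s i = 1)
include hs

theorem signFlip_signFlip (x : EuclideanSpace ℝ ι) : signFlip s (signFlip s x) = x := by
  ext i
  simp [← mul_assoc, hs]

theorem evalFun_psum_signFlip [Fintype ι] {m : ℕ} (hm : Even m) (x : EuclideanSpace ℝ ι) :
    evalFun ι (psum ι ℝ m) (signFlip s x) = evalFun ι (psum ι ℝ m) x := by
  obtain ⟨r, rfl⟩ := hm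
  simp only [evalFun_psum, signFlip_apply]
  refine Finset.sum_congr rfl fun i _ => ?_
  rw [mul_pow, ← two_mul, pow_mul, sq (s i), hs, one_pow, one_mul]

omit hs in
theorem evalFun_psum_add_const [Fintype ι] (k : ℕ) (a : ℝ) (y : EuclideanSpace ℝ ι) :
    evalFun ι (psum ι ℝ k) (y + WithLp.toLp 2 fun _ => a) =
      ∑ j ∈ Finset.range (k + 1), (k.choose j * a ^ (k - j)) * evalFun ι (psum ι ℝ j) y := by
  simp only [evalFun_psum, PiLp.add_apply, add_pow, Finset.mul_sum]
  rw [Finset.sum_comm]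
  refine Finset.sum_congr rfl fun j _ => Finset.sum_congr rfl fun i _ => ?_
  ring

theorem translate_psum_eq_sum [Fintype ι] {k : ℕ} (hk : Even k) (a : ℝ) :
    (fun v => evalFun ι (psum ι ℝ k) (v + signFlip s (WithLp.toLp 2 fun _ => a))) =
      ∑ j ∈ Finset.range (k + 1),
        (k.choose j * a ^ (k - j)) • precompAlgHom (signFlip s) (evalFun ι (psum ι ℝ j)) := by
  funext v
  have hflip : v + signFlip s (WithLp.toLp 2 fun _ => a) =
      signFlip s (signFlip s v + WithLp.toLp 2 fun _ => a) := by
    rw [map_add, signFlip_signFlip hs]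
  rw [hflip, evalFun_psum_signFlip hs hk, evalFun_psum_add_const]
  simp [Finset.sum_apply]

end SignFlip

section Stabilizer

variable {n : ℕ}

def IsW0StabilizerInv (c : EuclideanSpace ℝ (Fin n)) (f : EuclideanSpace ℝ (Fin n) → ℝ) : Prop :=
  ∀ (ε : Fin n → ℝ), (∀ i, ε i = 1 ∨ ε i = -1) → (∏ i, ε i = 1) →
    ∀ σ : Equiv.Perm (Fin n), sgnPerm ε σ c = c → ∀ x, f (sgnPerm ε σ x) = f x

def conjSign (s : Fin n → ℝ) (σ : Equiv.Perm (Fin n)) (i : Fin n) : ℝ := s i * s (σ i)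

variable {s : Fin n → ℝ} (hs : ∀ i, s i * s i = 1)
include hs

theorem conjSign_eq_one_or_neg_one (σ : Equiv.Perm (Fin n)) (i : Fin n) :
    conjSign s σ i = 1 ∨ conjSign s σ i = -1 := by
  refine mul_self_eq_one_iff.mp ?_
  rw [conjSign, mul_mul_mul_comm, hs, hs, one_mul]

theorem prod_conjSign (σ : Equiv.Perm (Fin n)) : ∏ i, conjSign s σ i = 1 := by
  simp only [conjSign]
  rw [Finset.prod_mul_distrib, Equiv.prod_comp σ s, ← Finset.prod_mul_distrib]
  simp [hs]

theorem sgnPerm_conjSign_signFlip (σ : Equiv.Perm (Fin n)) (x : EuclideanSpace ℝ (Fin n)) :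
    sgnPerm (conjSign s σ) σ (signFlip s x) = signFlip s (sgnPerm 1 σ x) := by
  ext i
  simp only [sgnPerm, conjSign, signFlip_apply, Pi.one_apply, one_mul]
  rw [mul_assoc, ← mul_assoc (s (σ i)), hs, one_mul]

omit hs in
theorem sgnPerm_one_const (σ : Equiv.Perm (Fin n)) (a : ℝ) :
    sgnPerm 1 σ (WithLp.toLp 2 fun _ => a) = WithLp.toLp 2 fun _ => a := by
  ext i
  simp [sgnPerm]

omit hs in
theorem evalFun_rename_perm (σ : Equiv.Perm (Fin n)) (p : MvPolynomial (Fin n) ℝ)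
    (x : EuclideanSpace ℝ (Fin n)) :
    evalFun (Fin n) (rename σ p) x = evalFun (Fin n) p (sgnPerm 1 σ x) := by
  simp only [evalFun_apply, eval_rename, sgnPerm, Pi.one_apply, one_mul]
  rfl

theorem isSymmetric_of_evalFun_eq_comp_signFlip {a : ℝ} {f : EuclideanSpace ℝ (Fin n) → ℝ}
    (hf : IsW0StabilizerInv (signFlip s (WithLp.toLp 2 fun _ => a)) f)
    {p : MvPolynomial (Fin n) ℝ} (hp : evalFun (Fin n) p = f ∘ signFlip s) : p.IsSymmetric := by
  intro σ
  refine evalFun_injective (funext fun x => ?_)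
  rw [evalFun_rename_perm, hp, Function.comp_apply, Function.comp_apply,
    ← sgnPerm_conjSign_signFlip hs]
  refine hf _ (conjSign_eq_one_or_neg_one hs σ) (prod_conjSign hs σ) σ ?_ _
  rw [sgnPerm_conjSign_signFlip hs, sgnPerm_one_const]

end Stabilizer

section Generation

variable {n : ℕ}

def invariantsAndTranslates (c : EuclideanSpace ℝ (Fin n)) :
    Set (EuclideanSpace ℝ (Fin n) → ℝ) :=
  {g | IsPolyFun g ∧ IsW0Inv g} ∪ {g | ∃ h, (IsPolyFun h ∧ IsW0Inv h) ∧ g = fun v => h (v + c)}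

theorem isW0Inv_evalFun_psum {m : ℕ} (hm : Even m) :
    IsW0Inv (evalFun (Fin n) (psum (Fin n) ℝ m)) := by
  intro ε hε _ σ x
  simp only [evalFun_psum, sgnPerm, mul_pow]
  have hεm : ∀ i, ε i ^ m = 1 := fun i => by
    rcases hε i with h | h <;> simp [h, hm.neg_one_pow]
  simp only [hεm, one_mul]
  exact Equiv.sum_comp σ fun j => x j ^ m

theorem evalFun_psum_mem_adjoin {m : ℕ} (hm : Even m) (c : EuclideanSpace ℝ (Fin n)) :
    evalFun (Fin n) (psum (Fin n) ℝ m) ∈ Algebra.adjoin ℝ (invariantsAndTranslates c) :=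
  Algebra.subset_adjoin
    (Or.inl ⟨isPolyFun_iff_exists_evalFun.mpr ⟨_, rfl⟩, isW0Inv_evalFun_psum hm⟩)

theorem translate_psum_mem_adjoin {m : ℕ} (hm : Even m) (c : EuclideanSpace ℝ (Fin n)) :
    (fun v => evalFun (Fin n) (psum (Fin n) ℝ m) (v + c)) ∈
      Algebra.adjoin ℝ (invariantsAndTranslates c) :=
  Algebra.subset_adjoin
    (Or.inr ⟨_, ⟨isPolyFun_iff_exists_evalFun.mpr ⟨_, rfl⟩, isW0Inv_evalFun_psum hm⟩, rfl⟩)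

theorem precompAlgHom_signFlip_psum_mem_adjoin {s : Fin n → ℝ} (hs : ∀ i, s i * s i = 1)
    {a : ℝ} (ha : a ≠ 0) (m : ℕ) :
    precompAlgHom (signFlip s) (evalFun (Fin n) (psum (Fin n) ℝ m)) ∈
      Algebra.adjoin ℝ (invariantsAndTranslates (signFlip s (WithLp.toLp 2 fun _ => a))) := by
  set S := Algebra.adjoin ℝ (invariantsAndTranslates (signFlip s (WithLp.toLp 2 fun _ => a)))
  set q := fun j => precompAlgHom (signFlip s) (evalFun (Fin n) (psum (Fin n) ℝ j))
  have hq_even {j : ℕ} (hj : Even j) : q j ∈ S := by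
    rw [show q j = _ from funext (evalFun_psum_signFlip hs hj)]
    exact evalFun_psum_mem_adjoin hj _
  induction m using Nat.strong_induction_on with
  | _ m ih =>
  show q m ∈ S
  rcases Nat.even_or_odd m with hm | hm
  · exact hq_even hm
  have hexp := translate_psum_eq_sum hs hm.add_one a
  rw [Finset.sum_range_succ, Finset.sum_range_succ, Nat.choose_succ_self_right, Nat.choose_self,
    Nat.sub_self, Nat.add_sub_cancel_left] at hexp
  have hcoeff : ((m + 1 : ℕ) : ℝ) * a ^ 1 ≠ 0 := by positivity
  have hqm : q m = (((m + 1 : ℕ) : ℝ) * a ^ 1)⁻¹ •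
      ((fun v => evalFun (Fin n) (psum (Fin n) ℝ (m + 1))
          (v + signFlip s (WithLp.toLp 2 fun _ => a))) -
        ∑ j ∈ Finset.range m, ((m + 1).choose j * a ^ (m + 1 - j)) • q j -
        ((1 : ℕ) * a ^ 0 : ℝ) • q (m + 1)) := by
    rw [hexp, eq_inv_smul_iff₀ hcoeff]
    abel
  rw [hqm]
  refine S.smul_mem (S.sub_mem (S.sub_mem (translate_psum_mem_adjoin hm.add_one _)
    (S.sum_mem fun j hj => S.smul_mem (ih j (Finset.mem_range.mp hj)) _))
    (S.smul_mem (hq_even hm.add_one) _)) _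

theorem precompAlgHom_signFlip_evalFun_mem_adjoin {s : Fin n → ℝ}
    (hs : ∀ i, s i * s i = 1) {a : ℝ} (ha : a ≠ 0) {p : MvPolynomial (Fin n) ℝ}
    (hp : p ∈ Algebra.adjoin ℝ (Set.range (psum (Fin n) ℝ))) :
    precompAlgHom (signFlip s) (evalFun (Fin n) p) ∈
      Algebra.adjoin ℝ (invariantsAndTranslates (signFlip s (WithLp.toLp 2 fun _ => a))) := by
  have hmap : ((precompAlgHom (signFlip s)).comp (evalFun (Fin n))) p ∈
      (Algebra.adjoin ℝ (Set.range (psum (Fin n) ℝ))).map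
        ((precompAlgHom (signFlip s)).comp (evalFun (Fin n))) :=
    Subalgebra.mem_map.mpr ⟨p, hp, rfl⟩
  rw [AlgHom.map_adjoin, ← Set.range_comp] at hmap
  refine Algebra.adjoin_le (Set.range_subset_iff.mpr fun m => ?_) hmap
  exact precompAlgHom_signFlip_psum_mem_adjoin hs ha m

end Generation

theorem Dn_stabilizer_of_c'_invariants_generated_general
    (n : ℕ)
    (c' : EuclideanSpace ℝ (Fin n))
    (hc' : ∀ i : Fin n, c' i = if (i : ℕ) + 1 = n then -(1 : ℝ) / 2 else (1 : ℝ) / 2)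
    (f : EuclideanSpace ℝ (Fin n) → ℝ) (hf : IsPolyFun f)
    -- `f` is invariant under the stabilizer `W°_{c'}` of `c'` in `W°`
    (hinv : ∀ (ε : Fin n → ℝ), (∀ i, ε i = 1 ∨ ε i = -1) → (∏ i, ε i = 1) →
      ∀ σ : Equiv.Perm (Fin n), sgnPerm ε σ c' = c' → ∀ x, f (sgnPerm ε σ x) = f x) :
    f ∈ Algebra.adjoin ℝ
      ({g : EuclideanSpace ℝ (Fin n) → ℝ | IsPolyFun g ∧ IsW0Inv g} ∪
       {g : EuclideanSpace ℝ (Fin n) → ℝ | ∃ h : EuclideanSpace ℝ (Fin n) → ℝ,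
          (IsPolyFun h ∧ IsW0Inv h) ∧ g = fun v => h (v + c')}) := by
  set s : Fin n → ℝ := fun i => if (i : ℕ) + 1 = n then -1 else 1
  have hs : ∀ i, s i * s i = 1 := fun i => by
    simp only [s]
    split_ifs <;> norm_num
  obtain rfl : c' = signFlip s (WithLp.toLp 2 fun _ => 1 / 2) := by
    ext i
    rw [hc', signFlip_apply]
    simp only [s]
    split_ifs <;> norm_num
  obtain ⟨p, hp⟩ := isPolyFun_iff_exists_evalFun.mp (hf.comp_linearMap (signFlip s))
  have hsym : p.IsSymmetric := isSymmetric_of_evalFun_eq_comp_signFlip hs hinv hp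
  have hfp : f = precompAlgHom (signFlip s) (evalFun (Fin n) p) := by
    funext x
    rw [precompAlgHom_apply, hp, Function.comp_apply, signFlip_signFlip hs]
  rw [hfp]
  exact precompAlgHom_signFlip_evalFun_mem_adjoin hs one_half_pos.ne' hsym.mem_adjoin_range_psum

theorem Dn_stabilizer_of_c'_invariants_generated
    (n : ℕ) (hn : 3 ≤ n)
    (c' : EuclideanSpace ℝ (Fin n))
    (hc' : ∀ i : Fin n, c' i = if (i : ℕ) + 1 = n then -(1 : ℝ) / 2 else (1 : ℝ) / 2)
    (f : EuclideanSpace ℝ (Fin n) → ℝ) (hf : IsPolyFun f)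
    -- `f` is invariant under the stabilizer `W°_{c'}` of `c'` in `W°`
    (hinv : ∀ (ε : Fin n → ℝ), (∀ i, ε i = 1 ∨ ε i = -1) → (∏ i, ε i = 1) →
      ∀ σ : Equiv.Perm (Fin n), sgnPerm ε σ c' = c' → ∀ x, f (sgnPerm ε σ x) = f x) :
    f ∈ Algebra.adjoin ℝ
      ({g : EuclideanSpace ℝ (Fin n) → ℝ | IsPolyFun g ∧ IsW0Inv g} ∪
       {g : EuclideanSpace ℝ (Fin n) → ℝ | ∃ h : EuclideanSpace ℝ (Fin n) → ℝ,
          (IsPolyFun h ∧ IsW0Inv h) ∧ g = fun v => h (v + c')}) :=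
  Dn_stabilizer_of_c'_invariants_generated_general n c' hc' f hf hinv
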